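/- Fix an integer m ≥ 1, let h(n) be the sequence with h(1)=0 in which each non-negative integer k appears exactly mk+1 times, and let a(n) = n - h(n). Then for every n ≥ 1, h(n+1) - 1 = h(a^{(m)}(n)), where a^{(m)} is the m-fold iterate of a. (In particular h(a^{(m)}(n)) = h(n+1) - 1 holds as an identity of integers, with h(n+1) ≥ 1 for n ≥ 1.) -/

import Mathlib

/-!
The values of `h` come in consecutive blocks: block `k` is `[blockStart m k, blockStart m (k + 1))`,
of length `m k + 1`, and on it `a` subtracts `k`. If `n + 1` lies in block `s + 1`, then `n` lies in
the last `m (s + 1) + 1` places before block `s + 2`. Each application of `a` moves such a point down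
by `s + 1` while it is in block `s + 1` and by `s` once it is in block `s`; the invariant
`blockStart m s + i s ≤ v < blockStart m (s + 1) + i (s + 1)`, with `i` the number of steps left,
shows that after `m` steps the point sits in block `s`.
-/

def blockStart (m k : ℕ) : ℕ := 1 + m * (k * (k - 1) / 2) + k

lemma one_le_blockStart (m k : ℕ) : 1 ≤ blockStart m k := by
  unfold blockStart
  omega

lemma blockStart_zero (m : ℕ) : blockStart m 0 = 1 := rfl

lemma blockStart_succ (m k : ℕ) : blockStart m (k + 1) = blockStart m k + m * k + 1 := by
  have htri : (k + 1) * k / 2 = k * (k - 1) / 2 + k := by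
    cases k with
    | zero => rfl
    | succ j =>
      rw [Nat.add_sub_cancel, show (j + 1 + 1) * (j + 1) = (j + 1) * j + (j + 1) * 2 by ring,
        Nat.add_mul_div_right _ _ two_pos]
  simp only [blockStart, Nat.add_sub_cancel, htri]
  ring

section Iterate

variable {m : ℕ} {a : ℕ → ℕ}

lemma iterate_mem_block
    (ha : ∀ k v, blockStart m k ≤ v → v < blockStart m (k + 1) → a v = v - k)
    (s : ℕ) {i : ℕ} (hi : i ≤ m) {v : ℕ} (hlo : blockStart m s + i * s ≤ v)
    (hhi : v < blockStart m (s + 1) + i * (s + 1)) :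
    blockStart m s ≤ a^[i] v ∧ a^[i] v < blockStart m (s + 1) := by
  induction i generalizing v with
  | zero => exact ⟨by simpa using hlo, by simpa using hhi⟩
  | succ i ih =>
    have hs := blockStart_succ m s
    have hs' := blockStart_succ m (s + 1)
    have him : (i + 1) * s ≤ m * s := Nat.mul_le_mul_right s hi
    have him' : (i + 1) * (s + 1) ≤ m * (s + 1) := Nat.mul_le_mul_right (s + 1) hi
    rw [Nat.succ_mul] at hlo hhi him him'
    rw [Function.iterate_succ_apply]
    by_cases hv : v < blockStart m (s + 1)
    · rw [ha s v (by omega) hv]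
      exact ih (by omega) (by omega) (by omega)
    · rw [ha (s + 1) v (by omega) (by omega)]
      exact ih (by omega) (by omega) (by omega)

end Iterate

theorem key_identity_general (m : ℕ) (h : ℕ → ℕ)
    (hh : ∀ n k : ℕ, 1 ≤ n →
      (h n = k ↔ (1 + m * (k * (k - 1) / 2) + k ≤ n ∧ n < 1 + m * ((k + 1) * k / 2) + (k + 1))))
    (a : ℕ → ℕ) (ha : ∀ n, a n = n - h n)
    (n : ℕ) (hn : 1 ≤ n) :
    1 ≤ h (n + 1) ∧ h (n + 1) - 1 = h (a^[m] n) := by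
  have h_eq_iff : ∀ v k, 1 ≤ v → (h v = k ↔ blockStart m k ≤ v ∧ v < blockStart m (k + 1)) :=
    fun v k hv => hh v k hv -- `k + 1 - 1` reduces to `k`
  have h_eq : ∀ k v, blockStart m k ≤ v → v < blockStart m (k + 1) → h v = k :=
    fun k v hlo hhi => (h_eq_iff v k ((one_le_blockStart m k).trans hlo)).2 ⟨hlo, hhi⟩
  have a_eq : ∀ k v, blockStart m k ≤ v → v < blockStart m (k + 1) → a v = v - k :=
    fun k v hlo hhi => by rw [ha, h_eq k v hlo hhi]
  obtain ⟨hlo, hhi⟩ := (h_eq_iff (n + 1) (h (n + 1)) (by omega)).1 rfl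
  obtain ⟨s, hs⟩ : ∃ s, h (n + 1) = s + 1 := by
    refine Nat.exists_eq_add_one.2 (Nat.pos_of_ne_zero fun h0 => ?_)
    rw [h0, zero_add, blockStart_succ, blockStart_zero] at hhi
    omega
  rw [hs] at hlo hhi
  have hs₁ := blockStart_succ m s
  have hs₂ := blockStart_succ m (s + 1)
  obtain ⟨hlo', hhi'⟩ := iterate_mem_block a_eq s le_rfl (v := n) (by omega) (by omega)
  rw [hs, h_eq s _ hlo' hhi']
  omega

/-- The key identity: for all `n ≥ 1`, `h(n+1) - 1 = h(a^{(m)}(n))`,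
with `h(n+1) ≥ 1`. -/
theorem key_identity (m : ℕ) (hm : 1 ≤ m) (h : ℕ → ℕ)
    (hh : ∀ n k : ℕ, 1 ≤ n →
      (h n = k ↔ (1 + m * (k * (k - 1) / 2) + k ≤ n ∧ n < 1 + m * ((k + 1) * k / 2) + (k + 1))))
    (a : ℕ → ℕ) (ha : ∀ n, a n = n - h n)
    (n : ℕ) (hn : 1 ≤ n) :
    1 ≤ h (n + 1) ∧ h (n + 1) - 1 = h (a^[m] n) :=
  key_identity_general m h hh a ha n hn
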